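/- arXiv:2507.10767 — 6 statements merged into one kernel-verified Lean document; each statement's English description precedes it below -/
import Mathlib

section
/- For real numbers s_uu, s_uv, s_vv, t_uuu, t_uuv, t_uvv, t_vvv of the form s_uu = L2 + μ²M2, s_uv = λL2 + μM2, s_vv = λ²L2 + M2, t_uuu = L3 + μ³M3, t_uuv = λL3 + μ²M3, t_uvv = λ²L3 + μM3, t_vvv = λ³L3 + M3 (for arbitrary reals λ, μ, L2, L3, M2, M3), the determinant of the 3×3 matrix with rows (s_uu, s_uv, s_vv), (t_uuu, t_uuv, t_uvv), (t_uuv, t_uvv, t_vvv) is zero. -/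
open Matrix

/-- Vanishing of the determinant `d^{3×3}_{uv}` for two nodes on a common cycle:
the moment matrix is a sum of two rank-1 matrices. -/
theorem stmt_4 (l μ L2 L3 M2 M3 : ℝ) :
    (!![L2 + μ ^ 2 * M2,      l * L2 + μ * M2,      l ^ 2 * L2 + M2;
        L3 + μ ^ 3 * M3,      l * L3 + μ ^ 2 * M3,  l ^ 2 * L3 + μ * M3;
        l * L3 + μ ^ 2 * M3,  l ^ 2 * L3 + μ * M3,  l ^ 3 * L3 + M3] :
      Matrix (Fin 3) (Fin 3) ℝ).det = 0 := by
  simp [Matrix.det_fin_three]; ring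
end

section
/- For real numbers s_uu, s_uv, s_vv, t_uuu, t_uuv, t_uvv, t_vvv of the form s_uu = a, s_uv = λa, s_vv = λ²a + b, t_uuu = c, t_uuv = λc, t_uvv = λ²c, t_vvv = λ³c + d (for arbitrary reals λ, a, b, c, d), the determinant of the 3×3 matrix with rows (s_uu, s_uv, s_vv), (t_uuu, t_uuv, t_uvv), (t_uuv, t_uvv, t_vvv) is zero. -/
open Matrix

/-- Vanishing of `d^{3×3}_{uv}` when there is a directed path from `u` to `v` but no
path back and no simple trek with non-empty sides. -/
theorem stmt_5 (l a b c d : ℝ) :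
    (!![a,      l * a,      l ^ 2 * a + b;
        c,      l * c,      l ^ 2 * c;
        l * c,  l ^ 2 * c,  l ^ 3 * c + d] : Matrix (Fin 3) (Fin 3) ℝ).det = 0 := by
  simp [Matrix.det_fin_three]; ring
end

section
/- Let Λ be a block matrix with blocks indexed by C and D = complement of C, with Λ_DC = 0, and let Ω be a positive definite diagonal matrix. Set S = (I-Λ)^{-T} Ω (I-Λ)^{-1}. Then the regression coefficient matrix R = S_DC (S_CC)^{-1} satisfies R = (I - Λ_DD)^{-T} (Λ_CD)^T. -/
open Matrix

/-- Regression coefficients onto an ancestral set: if `Λ_DC = 0` and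
`S = (I-Λ)^{-T} Ω (I-Λ)⁻¹` with `Ω` diagonal positive definite, then
`R = S_DC S_CC⁻¹ = (I-Λ_DD)^{-T} Λ_CDᵀ`. -/
theorem stmt_8 {c d : Type*} [Fintype c] [Fintype d] [DecidableEq c] [DecidableEq d]
    (Λ : Matrix (c ⊕ d) (c ⊕ d) ℝ)
    (hDC : ∀ (i : d) (j : c), Λ (Sum.inr i) (Sum.inl j) = 0)
    (hinv : IsUnit (1 - Λ))
    (ω : c ⊕ d → ℝ) (hω : ∀ i, 0 < ω i)
    (S : Matrix (c ⊕ d) (c ⊕ d) ℝ)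
    (hS : S = ((1 - Λ)⁻¹)ᵀ * Matrix.diagonal ω * (1 - Λ)⁻¹)
    (SDC : Matrix d c ℝ) (hSDC : SDC = Matrix.of fun i j => S (Sum.inr i) (Sum.inl j))
    (SCC : Matrix c c ℝ) (hSCC : SCC = Matrix.of fun i j => S (Sum.inl i) (Sum.inl j))
    (R : Matrix d c ℝ) (hR : R = SDC * SCC⁻¹) :
    R = ((1 - Matrix.of fun (i : d) (j : d) => Λ (Sum.inr i) (Sum.inr j))⁻¹)ᵀ *
        (Matrix.of fun (i : c) (j : d) => Λ (Sum.inl i) (Sum.inr j))ᵀ := by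
  set A : Matrix c c ℝ := Matrix.of fun i j => Λ (Sum.inl i) (Sum.inl j) with hA
  set B : Matrix c d ℝ := Matrix.of fun i j => Λ (Sum.inl i) (Sum.inr j) with hB
  set Dm : Matrix d d ℝ := Matrix.of fun i j => Λ (Sum.inr i) (Sum.inr j) with hDm
  have hΛ : Λ = fromBlocks A B 0 Dm := by
    ext i j
    rcases i with i | i <;> rcases j with j | j <;>
      simp [fromBlocks, hA, hB, hDm, hDC]
  have h1Λ : 1 - Λ = fromBlocks (1 - A) (-B) 0 (1 - Dm) := by
    rw [hΛ]
    ext i j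
    rcases i with i | i <;> rcases j with j | j <;>
      simp [fromBlocks, Matrix.one_apply, Matrix.sub_apply]
  rw [h1Λ, isUnit_fromBlocks_zero₂₁] at hinv
  obtain ⟨hAu, hDu⟩ := hinv
  have hMinv : (fromBlocks (1 - A) (-B) 0 (1 - Dm))⁻¹ =
      fromBlocks (1 - A)⁻¹ (-((1 - A)⁻¹ * (-B) * (1 - Dm)⁻¹)) 0 (1 - Dm)⁻¹ :=
    inv_fromBlocks_zero₂₁_of_isUnit_iff _ _ _ (iff_of_true hAu hDu)
  set P : Matrix c c ℝ := (1 - A)⁻¹ with hP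
  set E : Matrix d d ℝ := (1 - Dm)⁻¹ with hE
  set Q : Matrix c d ℝ := P * B * E with hQ
  have hM : (1 - Λ)⁻¹ = fromBlocks P Q 0 E := by
    rw [h1Λ, hMinv]; congr 1; simp [hQ, Matrix.neg_mul, Matrix.mul_neg]
  have hdiag : Matrix.diagonal ω =
      fromBlocks (Matrix.diagonal (ω ∘ Sum.inl)) 0 0 (Matrix.diagonal (ω ∘ Sum.inr)) := by
    ext i j
    rcases i with i | i <;> rcases j with j | j <;>
      simp [Matrix.diagonal, fromBlocks, Matrix.one_apply]
  set Ωc : Matrix c c ℝ := Matrix.diagonal (ω ∘ Sum.inl) with hΩc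
  have hSblocks : S = fromBlocks (Pᵀ * Ωc * P) (Pᵀ * Ωc * Q)
      (Qᵀ * Ωc * P) (Qᵀ * Ωc * Q + Eᵀ * Matrix.diagonal (ω ∘ Sum.inr) * E) := by
    rw [hS, hM, hdiag, fromBlocks_transpose, fromBlocks_multiply, fromBlocks_multiply]
    congr 1 <;> simp [Matrix.mul_assoc]
  have hSDC' : SDC = Qᵀ * Ωc * P := by
    rw [hSDC, hSblocks]; ext i j; simp [fromBlocks]
  have hSCC' : SCC = Pᵀ * Ωc * P := by
    rw [hSCC, hSblocks]; ext i j; simp [fromBlocks]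
  have hPu : IsUnit P := isUnit_nonsing_inv_iff.mpr hAu
  have hΩu : IsUnit Ωc := by
    rw [Matrix.isUnit_iff_isUnit_det, det_diagonal]
    exact (Finset.prod_pos fun i _ => hω (Sum.inl i)).ne'.isUnit
  have hPdet : IsUnit P.det := (Matrix.isUnit_iff_isUnit_det _).mp hPu
  have hΩdet : IsUnit Ωc.det := (Matrix.isUnit_iff_isUnit_det _).mp hΩu
  have hPtdet : IsUnit Pᵀ.det := Matrix.isUnit_det_transpose P hPdet
  rw [hR, hSDC', hSCC', Matrix.mul_inv_rev, Matrix.mul_inv_rev]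
  calc Qᵀ * Ωc * P * (P⁻¹ * (Ωc⁻¹ * (Pᵀ)⁻¹))
      = Qᵀ * ((Ωc * (P * P⁻¹)) * Ωc⁻¹) * (Pᵀ)⁻¹ := by
        simp only [Matrix.mul_assoc]
    _ = Qᵀ * (Pᵀ)⁻¹ := by
        rw [Matrix.mul_nonsing_inv _ hPdet, Matrix.mul_one,
          Matrix.mul_nonsing_inv _ hΩdet, Matrix.mul_one]
    _ = Eᵀ * Bᵀ * (Pᵀ * (Pᵀ)⁻¹) := by
        rw [hQ, Matrix.transpose_mul, Matrix.transpose_mul]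
        simp only [Matrix.mul_assoc]
    _ = Eᵀ * Bᵀ := by rw [Matrix.mul_nonsing_inv _ hPtdet, Matrix.mul_one]
end

section
/- Let λ, ℓ2, ℓ3, μ, m2, m3 be real numbers and define s_uu = ℓ2 + μ² m2, s_uv = λ ℓ2 + μ m2, s_vv = λ² ℓ2 + m2, t_uuu = ℓ3 + μ³ m3, t_uuv = λ ℓ3 + μ² m3, t_uvv = λ² ℓ3 + μ m3, t_vvv = λ³ ℓ3 + m3. Then the 4×3 matrix with rows (1, λ, λ²), (s_uu, s_uv, s_vv), (t_uuu, t_uuv, t_uvv), (t_uuv, t_uvv, t_vvv) has rank at most 2. -/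
open Matrix

/-- Lemma 4.9 for `A^{(2)}_{uv}`: the 4×3 matrix of moments has rank at most 2. -/
theorem stmt_11 (l μ l2 l3 m2 m3 : ℝ) :
    (!![1,                  l,                      l ^ 2;
        l2 + μ ^ 2 * m2,    l * l2 + μ * m2,        l ^ 2 * l2 + m2;
        l3 + μ ^ 3 * m3,    l * l3 + μ ^ 2 * m3,    l ^ 2 * l3 + μ * m3;
        l * l3 + μ ^ 2 * m3, l ^ 2 * l3 + μ * m3,   l ^ 3 * l3 + m3] :
      Matrix (Fin 4) (Fin 3) ℝ).rank ≤ 2 := by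
  have hfac : (!![1,                  l,                      l ^ 2;
        l2 + μ ^ 2 * m2,    l * l2 + μ * m2,        l ^ 2 * l2 + m2;
        l3 + μ ^ 3 * m3,    l * l3 + μ ^ 2 * m3,    l ^ 2 * l3 + μ * m3;
        l * l3 + μ ^ 2 * m3, l ^ 2 * l3 + μ * m3,   l ^ 3 * l3 + m3] :
      Matrix (Fin 4) (Fin 3) ℝ) =
      (!![(1:ℝ), 0; l2, m2; l3, μ * m3; l * l3, m3] : Matrix (Fin 4) (Fin 2) ℝ) *
      (!![(1:ℝ), l, l ^ 2; μ ^ 2, μ, 1] : Matrix (Fin 2) (Fin 3) ℝ) := by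
    ext i j
    fin_cases i <;> fin_cases j <;>
      simp [Matrix.mul_apply, Fin.sum_univ_succ] <;> ring
  rw [hfac]
  exact le_trans (Matrix.rank_mul_le_right _ _)
    (by simpa using Matrix.rank_le_card_height (!![(1:ℝ), l, l ^ 2; μ ^ 2, μ, 1]))
end

section
/- Let A = M + N + O be a 3×5 real matrix written as a sum of three matrices of rank at most 1, where the second column of M equals λ times its first column, and the fourth and fifth columns of M are zero while the first column of N is zero. Then, writing A_i for the i-th column of A, det(A_2, A_4, A_5) = λ · det(A_1, A_4, A_5). -/
open Matrix

lemma aux_rank_add_le (A B : Matrix (Fin 3) (Fin 5) ℝ) :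
    (A + B).rank ≤ A.rank + B.rank := by
  rw [Matrix.rank, Matrix.rank, Matrix.rank]
  have h : LinearMap.range (A + B).mulVecLin ≤
      LinearMap.range A.mulVecLin ⊔ LinearMap.range B.mulVecLin := by
    rintro x ⟨v, rfl⟩
    have : (A + B).mulVecLin v = A.mulVecLin v + B.mulVecLin v := by
      simp [Matrix.mulVecLin_add]
    rw [this]
    exact Submodule.add_mem_sup ⟨v, rfl⟩ ⟨v, rfl⟩
  exact le_trans (Submodule.finrank_mono h)
    (Submodule.finrank_add_le_finrank_add_finrank _ _)

lemma aux_rank_colsub_le (B : Matrix (Fin 3) (Fin 5) ℝ) (g : Fin 3 → Fin 5) :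
    (B.submatrix id g).rank ≤ B.rank := by
  have : B.submatrix id g = B * ((1 : Matrix (Fin 5) (Fin 5) ℝ).submatrix id g) := by
    ext i k
    simp [Matrix.mul_apply, Matrix.one_apply]
  rw [this]
  exact Matrix.rank_mul_le_left _ _

lemma aux_det_zero (B : Matrix (Fin 3) (Fin 5) ℝ) (hB : B.rank ≤ 2) (g : Fin 3 → Fin 5) :
    (B.submatrix id g).det = 0 := by
  by_contra h
  have hu : IsUnit (B.submatrix id g) :=
    (Matrix.isUnit_iff_isUnit_det _).mpr (isUnit_iff_ne_zero.mpr h)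
  have := Matrix.rank_of_isUnit _ hu
  have h3 : (B.submatrix id g).rank = 3 := by simpa using this
  have := le_trans (aux_rank_colsub_le B g) hB
  omega

/-- Core of Theorem 4.10(i): for `A = M + N + O` with `M`, `N`, `O` of rank ≤ 1,
the second column of `M` equal to `λ` times its first, the fourth and fifth columns
of `M` zero and the first column of `N` zero, we have
`det(A_2, A_4, A_5) = λ · det(A_1, A_4, A_5)`. -/
theorem stmt_13 (l : ℝ) (M N O : Matrix (Fin 3) (Fin 5) ℝ)
    (hM : M.rank ≤ 1) (hN : N.rank ≤ 1) (hO : O.rank ≤ 1)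
    (hM2 : ∀ i, M i 1 = l * M i 0)
    (hM4 : ∀ i, M i 3 = 0) (hM5 : ∀ i, M i 4 = 0)
    (hN1 : ∀ i, N i 0 = 0) :
    ((M + N + O).submatrix id ![1, 3, 4]).det =
      l * ((M + N + O).submatrix id ![0, 3, 4]).det := by
  set B : Matrix (Fin 3) (Fin 5) ℝ := N + O with hB
  have hBr : B.rank ≤ 2 := le_trans (aux_rank_add_le N O) (by omega)
  set P : Matrix (Fin 3) (Fin 3) ℝ := B.submatrix id ![1, 3, 4] with hP
  set Q : Matrix (Fin 3) (Fin 3) ℝ := B.submatrix id ![0, 3, 4] with hQ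
  have hPdet : P.det = 0 := aux_det_zero B hBr _
  have hQdet : Q.det = 0 := aux_det_zero B hBr _
  set m : Fin 3 → ℝ := fun i => M i 0 with hm
  have hL : (M + N + O).submatrix id ![1, 3, 4] =
      P.updateCol 0 ((l • m) + fun i => B i 1) := by
    ext i j
    fin_cases j <;>
      simp [hP, hB, hm, Matrix.updateCol_apply, hM2, hM4, hM5, mul_comm, add_assoc]
  have hR : (M + N + O).submatrix id ![0, 3, 4] =
      Q.updateCol 0 (m + fun i => B i 0) := by
    ext i j
    fin_cases j <;>
      simp [hQ, hB, hm, Matrix.updateCol_apply, hM4, hM5, hN1]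
  have hPQ : P.updateCol 0 m = Q.updateCol 0 m := by
    ext i j
    fin_cases j <;> simp [hP, hQ, Matrix.updateCol_apply]
  rw [hL, hR, Matrix.det_updateCol_add, Matrix.det_updateCol_add,
    Matrix.det_updateCol_smul]
  have e1 : P.updateCol 0 (fun i => B i 1) = P := by
    ext i j
    rcases eq_or_ne j 0 with rfl | hj
    · simp [Matrix.updateCol_apply, hP]
    · simp [Matrix.updateCol_apply, hj]
  have e2 : Q.updateCol 0 (fun i => B i 0) = Q := by
    ext i j
    rcases eq_or_ne j 0 with rfl | hj
    · simp [Matrix.updateCol_apply, hQ]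
    · simp [Matrix.updateCol_apply, hj]
  rw [e1, e2, hPQ, hPdet, hQdet]
  ring
end

section
/- Let π be a permutation of a finite vertex set V that factors according to vertex-disjoint cycles in a directed graph G = (V, E), i.e., for each nontrivial cycle (i₁ i₂ ⋯ i_s) of π, the directed cycle i₁→i₂→⋯→i_s→i₁ lies in G. Then the map G ↦ π(G), where π(E) contains i→j iff (i = π(j) and i ≠ j) or (i ≠ π(j), i ≠ j, and i→π(j) ∈ E), defines a graph in which π^{-1} factors according to vertex-disjoint cycles, and π^{-1}(π(G)) = G. -/
/-- The edge set `π(E)` of the transformed graph `π(G)`. -/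
def mapEdges {V : Type*} (π : Equiv.Perm V) (E : V → V → Prop) : V → V → Prop :=
  fun i j => (i = π j ∧ i ≠ j) ∨ (i ≠ π j ∧ i ≠ j ∧ E i (π j))

/-! Since `π(G)` contains every edge `π j → j`, `π⁻¹` factors in it along the reversed cycles.
Applying `π⁻¹` afterwards, an edge `i → j` of `π⁻¹(π(G))` either lies on a cycle of `π`
(`π i = j`, an edge of `G` by the factorisation hypothesis) or is an edge `i → j` of `G` itself;
conversely every edge of `G` survives, as `G` has no loops. -/

namespace mapEdges

variable {V : Type*} (π : Equiv.Perm V) (E : V → V → Prop)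

theorem apply_inv {i : V} (hi : π⁻¹ i ≠ i) : mapEdges π E i (π⁻¹ i) :=
  Or.inl ⟨(π.apply_symm_apply i).symm, hi.symm⟩

theorem inv_mapEdges_iff (i j : V) :
    mapEdges π⁻¹ (mapEdges π E) i j ↔ (i = π⁻¹ j ∧ i ≠ j) ∨ (i ≠ π⁻¹ j ∧ i ≠ j ∧ E i j) := by
  have hcancel : π (π⁻¹ j) = j := π.apply_symm_apply j
  simp only [mapEdges, hcancel]
  constructor
  · rintro (h | ⟨hne, hij, ⟨heq, -⟩ | ⟨-, -, hE⟩⟩)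
    · exact Or.inl h
    · exact absurd heq hij
    · exact Or.inr ⟨hne, hij, hE⟩
  · rintro (h | ⟨hne, hij, hE⟩)
    · exact Or.inl h
    · exact Or.inr ⟨hne, hij, Or.inr ⟨hij, hne, hE⟩⟩

theorem inv_mapEdges (hloop : ∀ v, ¬ E v v) (hfac : ∀ i, π i ≠ i → E i (π i)) :
    mapEdges π⁻¹ (mapEdges π E) = E := by
  funext i j
  rw [eq_iff_iff, inv_mapEdges_iff]
  constructor
  · rintro (⟨rfl, hij⟩ | ⟨-, -, hE⟩)
    · simpa using hfac (π⁻¹ j) (by simpa using hij.symm)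
    · exact hE
  · intro hE
    have hij : i ≠ j := by rintro rfl; exact hloop i hE
    by_cases h : i = π⁻¹ j
    · exact Or.inl ⟨h, hij⟩
    · exact Or.inr ⟨h, hij, hE⟩

end mapEdges

theorem stmt_18_general {V : Type*}
    (E : V → V → Prop) (hloop : ∀ v, ¬ E v v)
    (π : Equiv.Perm V) (hfac : ∀ i, π i ≠ i → E i (π i)) :
    (∀ i, π⁻¹ i ≠ i → mapEdges π E i (π⁻¹ i)) ∧
      mapEdges π⁻¹ (mapEdges π E) = E :=
  ⟨fun _ hi => mapEdges.apply_inv π E hi, mapEdges.inv_mapEdges π E hloop hfac⟩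

/-- If `π` factors according to vertex-disjoint cycles in `G = (V, E)` (a finite
directed graph without self-loops), then `π⁻¹` factors according to vertex-disjoint
cycles in `π(G)`, and `π⁻¹(π(G)) = G`. -/
theorem stmt_18 {V : Type*} [Fintype V] [DecidableEq V]
    (E : V → V → Prop) (hloop : ∀ v, ¬ E v v)
    (π : Equiv.Perm V) (hfac : ∀ i, π i ≠ i → E i (π i)) :
    (∀ i, π⁻¹ i ≠ i → mapEdges π E i (π⁻¹ i)) ∧
      mapEdges π⁻¹ (mapEdges π E) = E :=
  stmt_18_general E hloop π hfac
end
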